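/- arXiv:1610.03975 — 2 statements merged into one kernel-verified Lean document; each statement's English description precedes it below -/
import Mathlib

section
/- Let b > 0 and let E = {(x,y) ∈ ℝ² : x² + (y/b)² = 1} be an ellipse, and let f = (x₀, y₀) ∈ E. Suppose P is a map defined on a neighborhood of f in ℝ² such that for each p in that neighborhood, P(p) ∈ E and ‖p − P(p)‖ = infDist(p, E) (P is a nearest-point projection onto E). Then P is differentiable at f and its derivative equals the orthogonal projection of ℝ² onto the tangent direction {(s,t) ∈ ℝ² : x₀ s + (y₀/b²) t = 0}; equivalently, writing H_f for the tangent line to E at f and P_{H_f} for the metric projection onto H_f, one has ‖P(p) − P_{H_f}(p)‖ = o(‖p − f‖) as p → f. -/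
/-!
Let `K` be a subspace with orthogonal projection `L`, and let a set `M ∋ f` be tangent to
`f + K` at `f` in two senses: points `q ∈ M` near `f` lie within `o(‖q - f‖)` of `f + K`, and
every `f + L v` lies within `o(‖v‖)` of a point of `M`. If `q = P p` is a nearest point of `M`
to `p`, write `v = p - f`, `u = q - f`. Comparing `‖p - q‖` with the distance from `p` to a
point of `M` near `f + L v`, the normal components of `v - u` and `v - L v` agree up to
`o(‖v‖)`, so by Pythagoras the tangential component `L (v - u)` is `o(‖v‖)`; together with
`u - L u = o(‖v‖)` this gives `u - L v = o(‖v‖)`, i.e. `P` has derivative `L` at `f`.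

For the ellipse, the first property is the exact identity `2 ⟪n, q - f⟫ = -Q (q - f)` for
`q, f ∈ E`, with `Q` the quadratic form of `E` and `n = (x₀, y₀ / b²)`; the second comes from
the curve `t ↦ cos t • f + sin t • τ` in `E`, whose velocity `τ` spans the tangent line.
-/

open Metric Asymptotics Topology

/-- The linear subspace `{(s,t) ∈ ℝ² : c s + d t = 0}` of the Euclidean plane. -/
def lineDir (c d : ℝ) : Submodule ℝ (EuclideanSpace ℝ (Fin 2)) where
  carrier := {v : EuclideanSpace ℝ (Fin 2) | c * v 0 + d * v 1 = 0}
  add_mem' := by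
    intro a b ha hb
    simp only [Set.mem_setOf_eq, PiLp.add_apply] at *
    linarith
  zero_mem' := by simp
  smul_mem' := by
    intro t a ha
    simp only [Set.mem_setOf_eq, PiLp.smul_apply, smul_eq_mul] at *
    linear_combination t * ha

open Filter
open scoped RealInnerProductSpace

section NearestPoint

variable {F : Type*} [NormedAddCommGroup F]

def IsNearestPoint (M : Set F) (p q : F) : Prop :=
  q ∈ M ∧ ∀ w ∈ M, ‖p - q‖ ≤ ‖p - w‖

variable {M : Set F} {f p q : F}

theorem isNearestPoint_of_norm_eq_infDist (hq : q ∈ M) (h : ‖p - q‖ = infDist p M) :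
    IsNearestPoint M p q :=
  ⟨hq, fun w hw ↦ h ▸ (infDist_le_dist_of_mem hw).trans_eq (dist_eq_norm p w)⟩

theorem IsNearestPoint.eq_of_mem (h : IsNearestPoint M f q) (hf : f ∈ M) : q = f := by
  simpa [sub_eq_zero, eq_comm] using h.2 f hf

theorem IsNearestPoint.norm_sub_le_two_mul (h : IsNearestPoint M p q) (hf : f ∈ M) :
    ‖q - f‖ ≤ 2 * ‖p - f‖ :=
  calc ‖q - f‖ ≤ ‖q - p‖ + ‖p - f‖ := norm_sub_le_norm_sub_add_norm_sub ..
    _ ≤ 2 * ‖p - f‖ := by linarith [norm_sub_rev p q, h.2 f hf]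

end NearestPoint

section OrthogonalProjection

variable {F : Type*} [NormedAddCommGroup F] [InnerProductSpace ℝ F]
  (K : Submodule ℝ F) [K.HasOrthogonalProjection]

theorem norm_sq_eq_norm_starProjection_sq_add (x : F) :
    ‖x‖ ^ 2 = ‖K.starProjection x‖ ^ 2 + ‖x - K.starProjection x‖ ^ 2 := by
  simpa using K.norm_sq_eq_add_norm_sq_starProjection x

theorem sq_norm_sub_starProjection_le {u v w : F} {η : ℝ} (hη : 0 ≤ η) (hη1 : η ≤ 1)
    (hnear : ‖v - u‖ ≤ ‖v - w‖) (hw : ‖w - K.starProjection v‖ ≤ η * ‖v‖)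
    (hu : ‖u - K.starProjection u‖ ≤ η * ‖v‖) :
    ‖u - K.starProjection v‖ ^ 2 ≤ 5 * η * ‖v‖ ^ 2 := by
  have hv := norm_sq_eq_norm_starProjection_sq_add K v
  have hvu := norm_sq_eq_norm_starProjection_sq_add K (v - u)
  have huv : ‖u - K.starProjection v‖ ^ 2
      = ‖K.starProjection (v - u)‖ ^ 2 + ‖u - K.starProjection u‖ ^ 2 := by
    have hLL := K.starProjection_eq_self_iff.2 (K.starProjection_apply_mem v)
    rw [norm_sq_eq_norm_starProjection_sq_add K (u - _), map_sub, hLL, sub_sub_sub_cancel_right,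
      ← norm_neg, neg_sub, ← map_sub]
  set L := K.starProjection
  set ν := ‖v‖
  set a := ‖v - L v‖
  have hupper : ‖v - u‖ ≤ a + η * ν := by
    calc ‖v - u‖ ≤ ‖(v - L v) - (w - L v)‖ := by simpa using hnear
      _ ≤ a + ‖w - L v‖ := norm_sub_le _ _
      _ ≤ a + η * ν := by gcongr
  have hlower : a - η * ν ≤ ‖v - u - L (v - u)‖ := by
    calc a - η * ν ≤ a - ‖u - L u‖ := by gcongr
      _ ≤ ‖(v - L v) - (u - L u)‖ := norm_sub_norm_le _ _
      _ = ‖v - u - L (v - u)‖ := by rw [map_sub]; abel_nf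
  have hη_sq : η * η * ν ^ 2 ≤ η * ν ^ 2 := by gcongr; exact mul_le_of_le_one_left hη hη1
  have hvu_sq : ‖v - u‖ ^ 2 ≤ (a + η * ν) ^ 2 := by gcongr
  have htangential : ‖L (v - u)‖ ^ 2 ≤ 4 * η * ν ^ 2 := by
    have ha : a ≤ ν := by nlinarith [norm_nonneg v, norm_nonneg (v - L v)]
    rcases le_total a (η * ν) with hsmall | hlarge
    · have : (a + η * ν) ^ 2 ≤ (2 * η * ν) ^ 2 := by gcongr; linarith
      nlinarith
    · have : (a - η * ν) ^ 2 ≤ ‖v - u - L (v - u)‖ ^ 2 := by gcongr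
      nlinarith [mul_le_mul_of_nonneg_left ha (by positivity : 0 ≤ η * ν)]
  have hu_sq : ‖u - L u‖ ^ 2 ≤ (η * ν) ^ 2 := by gcongr
  nlinarith

variable {M : Set F} {f : F} {P g : F → F}

theorem hasFDerivAt_of_isNearestPoint (hf : f ∈ M)
    (hP : ∀ᶠ p in 𝓝 f, IsNearestPoint M p (P p))
    (hflat : (fun q ↦ q - f - K.starProjection (q - f)) =o[𝓝[M] f] (fun q ↦ q - f))
    (hg : HasFDerivAt g K.starProjection f) (hgf : g f = f) (hgM : ∀ᶠ p in 𝓝 f, g p ∈ M) :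
    HasFDerivAt P K.starProjection f := by
  have hPf : P f = f := hP.self_of_nhds.eq_of_mem hf
  have hPO : (fun p ↦ P p - f) =O[𝓝 f] (fun p ↦ p - f) :=
    .of_bound 2 <| hP.mono fun p hp ↦ hp.norm_sub_le_two_mul hf
  have hPM : Tendsto P (𝓝 f) (𝓝[M] f) := by
    refine tendsto_nhdsWithin_iff.2 ⟨?_, hP.mono fun p hp ↦ hp.1⟩
    exact tendsto_sub_nhds_zero_iff.1 (hPO.trans_tendsto (tendsto_sub_nhds_zero_iff.2 tendsto_id))
  have hPflat := (hflat.comp_tendsto hPM).trans_isBigO hPO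
  have hgo := hasFDerivAt_iff_isLittleO.1 hg
  rw [hgf] at hgo
  rw [hasFDerivAt_iff_isLittleO, hPf, isLittleO_iff]
  intro ε hε
  set η := min 1 (ε ^ 2 / 5)
  have hη : 0 < η := by positivity
  filter_upwards [hP, hgM, isLittleO_iff.1 hPflat hη, isLittleO_iff.1 hgo hη]
    with p hp hgpM hPp hgp
  have hsq := sq_norm_sub_starProjection_le K hη.le (min_le_left _ _)
    (u := P p - f) (v := p - f) (w := g p - f) (by simpa using hp.2 _ hgpM)
    (by simpa [sub_sub] using hgp) (by simpa [sub_sub] using hPp)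
  have h5η : 5 * η ≤ ε ^ 2 := by linarith [min_le_right 1 (ε ^ 2 / 5)]
  refine (pow_le_pow_iff_left₀ (norm_nonneg _) (by positivity) two_ne_zero).1 ?_
  calc _ ≤ 5 * η * ‖p - f‖ ^ 2 := hsq
    _ ≤ (ε * ‖p - f‖) ^ 2 := by rw [mul_pow]; gcongr

end OrthogonalProjection

local notation "ℝ²" => EuclideanSpace ℝ (Fin 2)

theorem inner_fin_two (x y : ℝ²) : ⟪x, y⟫ = x 0 * y 0 + x 1 * y 1 := by
  simp [PiLp.inner_apply, Fin.sum_univ_two, mul_comm]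

theorem norm_sq_fin_two (x : ℝ²) : ‖x‖ ^ 2 = x 0 ^ 2 + x 1 ^ 2 := by
  simp [EuclideanSpace.real_norm_sq_eq, Fin.sum_univ_two]

theorem lineDir_eq_orthogonal (c d : ℝ) : lineDir c d = (ℝ ∙ !₂[c, d])ᗮ := by
  ext v
  simp [Submodule.mem_orthogonal_singleton_iff_inner_right, inner_fin_two, lineDir]

theorem lineDir_eq_span (c d : ℝ) (h : c ^ 2 + d ^ 2 ≠ 0) :
    lineDir c d = ℝ ∙ !₂[-d, c] := by
  refine le_antisymm (fun v hv ↦ ?_) ((Submodule.span_singleton_le_iff_mem _ _).2 ?_)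
  · change c * v 0 + d * v 1 = 0 at hv
    refine Submodule.mem_span_singleton.2 ⟨(c * v 1 - d * v 0) / (c ^ 2 + d ^ 2), ?_⟩
    ext i
    fin_cases i <;> simp only [Fin.zero_eta, Fin.mk_one, PiLp.smul_apply, Matrix.cons_val_zero,
      Matrix.cons_val_one, Matrix.cons_val_fin_one, smul_eq_mul, mul_neg] <;> field_simp
    · linear_combination (-c) * hv
    · linear_combination (-d) * hv
  · change c * -d + d * c = 0
    ring

def ellipse (b : ℝ) : Set ℝ² := {p | p 0 ^ 2 + (p 1 / b) ^ 2 = 1}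

variable {b : ℝ} {f q : ℝ²}

theorem inner_sub_of_mem_ellipse (hf : f ∈ ellipse b) (hq : q ∈ ellipse b) :
    ⟪!₂[f 0, f 1 / b ^ 2], q - f⟫ = -((q - f) 0 ^ 2 + ((q - f) 1 / b) ^ 2) / 2 := by
  simp only [ellipse, Set.mem_ofPred_eq] at hf hq
  simp only [inner_fin_two, PiLp.sub_apply, Matrix.cons_val_zero, Matrix.cons_val_one,
    Matrix.cons_val_fin_one]
  linear_combination (hq - hf) / 2

theorem norm_sub_lineDir_starProjection_le (hf : f ∈ ellipse b) (hq : q ∈ ellipse b) :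
    ‖q - f - (lineDir (f 0) (f 1 / b ^ 2)).starProjection (q - f)‖
      ≤ (1 + b⁻¹ ^ 2) / (2 * ‖!₂[f 0, f 1 / b ^ 2]‖) * ‖q - f‖ ^ 2 := by
  rw [lineDir_eq_orthogonal, Submodule.starProjection_orthogonal_val, sub_sub_cancel,
    Submodule.starProjection_singleton, norm_smul, inner_sub_of_mem_ellipse hf hq]
  set n : ℝ² := !₂[f 0, f 1 / b ^ 2]
  set u := q - f
  have hQ : (u 0) ^ 2 + (u 1 / b) ^ 2 ≤ (1 + b⁻¹ ^ 2) * ‖u‖ ^ 2 := by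
    rw [norm_sq_fin_two, div_eq_mul_inv]
    nlinarith [sq_nonneg (u 0 * b⁻¹), sq_nonneg (u 1), sq_nonneg (u 0), sq_nonneg (b⁻¹)]
  calc ‖-(u 0 ^ 2 + (u 1 / b) ^ 2) / 2 / (‖n‖ ^ 2 : ℝ)‖ * ‖n‖
      = (u 0 ^ 2 + (u 1 / b) ^ 2) / (2 * ‖n‖) := by
        rw [Real.norm_eq_abs, abs_div, abs_div, abs_neg, abs_of_nonneg (by positivity),
          abs_of_nonneg (by positivity), abs_of_nonneg (by positivity)]
        rcases (norm_nonneg n).eq_or_lt with hn | hn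
        · simp [← hn]
        · field_simp
    _ ≤ (1 + b⁻¹ ^ 2) / (2 * ‖n‖) * ‖u‖ ^ 2 := by
        rw [div_mul_eq_mul_div]
        gcongr

theorem isLittleO_sub_lineDir_starProjection (hf : f ∈ ellipse b) :
    (fun q ↦ q - f - (lineDir (f 0) (f 1 / b ^ 2)).starProjection (q - f))
      =o[𝓝[ellipse b] f] (fun q ↦ q - f) := by
  have hO : (fun q ↦ q - f - (lineDir (f 0) (f 1 / b ^ 2)).starProjection (q - f))
      =O[𝓝[ellipse b] f] (fun q ↦ ‖q - f‖ ^ 2) :=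
    .of_bound _ <| eventually_nhdsWithin_of_forall fun q hq ↦ by
      simpa using norm_sub_lineDir_starProjection_le hf hq
  refine hO.trans_isLittleO (IsLittleO.mono ?_ nhdsWithin_le_nhds)
  exact (isLittleO_norm_pow_id one_lt_two).comp_tendsto (tendsto_sub_nhds_zero_iff.2 tendsto_id)

noncomputable def ellipseTangent (b : ℝ) (f : ℝ²) : ℝ² := !₂[-(f 1 / b), b * f 0]

noncomputable def ellipseCurve (b : ℝ) (f : ℝ²) (t : ℝ) : ℝ² :=
  Real.cos t • f + Real.sin t • ellipseTangent b f

theorem ellipseCurve_zero : ellipseCurve b f 0 = f := by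
  simp [ellipseCurve]

theorem ellipseCurve_mem (hb : b ≠ 0) (hf : f ∈ ellipse b) (t : ℝ) :
    ellipseCurve b f t ∈ ellipse b := by
  simp only [ellipse, Set.mem_ofPred_eq] at hf ⊢
  field_simp at hf
  simp only [ellipseCurve, ellipseTangent, PiLp.add_apply, PiLp.smul_apply, smul_eq_mul,
    Matrix.cons_val_zero, Matrix.cons_val_one, Matrix.cons_val_fin_one, mul_neg]
  field_simp
  linear_combination hf + (f 0 ^ 2 * b ^ 2 + f 1 ^ 2) * Real.sin_sq_add_cos_sq t

theorem hasDerivAt_ellipseCurve : HasDerivAt (ellipseCurve b f) (ellipseTangent b f) 0 := by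
  have := ((Real.hasDerivAt_cos 0).smul_const f).fun_add
    ((Real.hasDerivAt_sin 0).smul_const (ellipseTangent b f))
  simp only [Real.sin_zero, neg_zero, zero_smul, Real.cos_zero, one_smul, zero_add] at this
  exact this

theorem lineDir_eq_span_ellipseTangent (hb : b ≠ 0) (hf : f ∈ ellipse b) :
    lineDir (f 0) (f 1 / b ^ 2) = ℝ ∙ ellipseTangent b f := by
  have hfd : f 0 ^ 2 + (f 1 / b ^ 2) ^ 2 ≠ 0 := by
    intro h0
    have hx : f 0 ^ 2 = 0 := by nlinarith [sq_nonneg (f 1 / b ^ 2)]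
    have hy : f 1 / b ^ 2 = 0 := pow_eq_zero_iff two_ne_zero |>.1 (by nlinarith [sq_nonneg (f 0)])
    simp only [ellipse, Set.mem_ofPred_eq] at hf
    rw [show f 1 / b = b * (f 1 / b ^ 2) by field_simp, hy, hx] at hf
    norm_num at hf
  have hτ : ellipseTangent b f = b • !₂[-(f 1 / b ^ 2), f 0] := by
    ext i
    fin_cases i <;> simp only [ellipseTangent, Fin.zero_eta, Fin.mk_one, PiLp.smul_apply,
      Matrix.cons_val_zero, Matrix.cons_val_one, Matrix.cons_val_fin_one, smul_eq_mul, mul_neg,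
      neg_inj]
    field_simp
  rw [hτ, Submodule.span_singleton_smul_eq (isUnit_iff_ne_zero.2 hb), lineDir_eq_span _ _ hfd]

theorem hasFDerivAt_ellipseCurve_comp_inner (hb : b ≠ 0) (hf : f ∈ ellipse b) :
    HasFDerivAt
      (fun p ↦ ellipseCurve b f (⟪ellipseTangent b f, p - f⟫ / ‖ellipseTangent b f‖ ^ 2))
      (lineDir (f 0) (f 1 / b ^ 2)).starProjection f := by
  set τ := ellipseTangent b f
  set ℓ : ℝ² →L[ℝ] ℝ := (‖τ‖ ^ 2)⁻¹ • innerSL ℝ τ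
  have hℓ : HasFDerivAt (fun p ↦ ℓ (p - f)) (ℓ.comp (.id ℝ ℝ²)) f :=
    ℓ.hasFDerivAt.comp f ((hasFDerivAt_id f).sub_const f)
  have hγ : HasDerivAt (ellipseCurve b f) τ (ℓ (f - f)) := by
    simpa using hasDerivAt_ellipseCurve
  have hder : (ContinuousLinearMap.toSpanSingleton ℝ τ).comp (ℓ.comp (.id ℝ ℝ²))
      = (lineDir (f 0) (f 1 / b ^ 2)).starProjection := by
    ext1 v
    rw [lineDir_eq_span_ellipseTangent hb hf, Submodule.starProjection_singleton]
    simp [ℓ, smul_smul, τ, div_eq_inv_mul]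
  have hcomp := hγ.hasFDerivAt.comp f hℓ
  rw [hder] at hcomp
  exact hcomp.congr_of_eventuallyEq (.of_forall fun p ↦ by simp [ℓ, div_eq_inv_mul])

/-- Any nearest-point projection `P` onto the ellipse
`E = {(x,y) : x² + (y/b)² = 1}` defined near a point `f ∈ E` is differentiable at `f` with
derivative the orthogonal projection onto the tangent direction
`{(s,t) : x₀ s + (y₀/b²) t = 0}`; equivalently `‖P p − P_{H_f} p‖ = o(‖p − f‖)` as `p → f`,
where `H_f` is the tangent line to `E` at `f`. -/
theorem ellipse_nearest_point_projection_hasFDerivAt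
    (b : ℝ) (hb : 0 < b)
    (E : Set (EuclideanSpace ℝ (Fin 2)))
    (hE : E = {p : EuclideanSpace ℝ (Fin 2) | (p 0) ^ 2 + (p 1 / b) ^ 2 = 1})
    (f : EuclideanSpace ℝ (Fin 2)) (hf : f ∈ E)
    (P : EuclideanSpace ℝ (Fin 2) → EuclideanSpace ℝ (Fin 2))
    (s : Set (EuclideanSpace ℝ (Fin 2))) (hs : s ∈ 𝓝 f)
    (hP : ∀ p ∈ s, P p ∈ E ∧ ‖p - P p‖ = infDist p E) :
    HasFDerivAt P
      ((lineDir (f 0) (f 1 / b ^ 2)).subtypeL.comp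
        (Submodule.orthogonalProjectionOnto (lineDir (f 0) (f 1 / b ^ 2)))) f ∧
    (fun p => P p - (f + ((lineDir (f 0) (f 1 / b ^ 2)).subtypeL.comp
        (Submodule.orthogonalProjectionOnto (lineDir (f 0) (f 1 / b ^ 2)))) (p - f)))
      =o[𝓝 f] (fun p => p - f) := by
  have hE' : E = ellipse b := hE
  subst hE'
  have hnear : ∀ᶠ p in 𝓝 f, IsNearestPoint (ellipse b) p (P p) :=
    mem_of_superset hs fun p hp ↦ isNearestPoint_of_norm_eq_infDist (hP p hp).1 (hP p hp).2
  have hderiv : HasFDerivAt P (lineDir (f 0) (f 1 / b ^ 2)).starProjection f :=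
    hasFDerivAt_of_isNearestPoint _ hf hnear (isLittleO_sub_lineDir_starProjection hf)
      (hasFDerivAt_ellipseCurve_comp_inner hb.ne' hf) (by simp [ellipseCurve_zero])
      (.of_forall fun _ ↦ ellipseCurve_mem hb.ne' hf _)
  have hPf : P f = f := hnear.self_of_nhds.eq_of_mem hf
  refine ⟨hderiv, ?_⟩
  simpa [hPf, sub_sub] using hasFDerivAt_iff_isLittleO.1 hderiv
end

section
/- Let b > 0, let E = {(x,y) ∈ ℝ² : x² + (y/b)² = 1} be an ellipse, let L be a line in ℝ², and let f ∈ E ∩ L be a feasible point at which L is not tangent to E (L is distinct from the tangent line to E at f). Then the Douglas–Rachford algorithm is locally convergent at f: there exists δ > 0 such that every sequence (x_n) with ‖x_0 − f‖ < δ generated by x_{n+1} = (1/2)(x_n + R_L R_E x_n), where R_E x = 2a − x for a nearest point a of E to x and R_L y = 2P_L y − y, converges to f. -/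
/-!
Near a point `f` of the quadric `{p | ⟪A p, p⟫ = 1}` (`A` positive), the quadric lies between two
paraboloids tangent to the hyperplane `(A f)ᗮ` at `f`. Comparing a nearest point `a` of `x` with
the point of the quadric above the tangential part of `x - f` shows that `a - f` is the orthogonal
projection of `x - f` onto that hyperplane up to `O(‖x - f‖ ^ (3 / 2))`. One Douglas–Rachford step
therefore agrees to first order with the linear Douglas–Rachford operator of the tangent hyperplane
and the line, whose norm is `√(1 - ⟪u, n⟫ ^ 2)` for unit normal `n` and unit direction `u`; this is
`< 1` exactly when the line is not tangent, so the iteration contracts towards `f`. The ellipse is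
the quadric of `diag(1, b⁻²)`.
-/

open Metric Filter Topology RealInnerProductSpace

theorem tendsto_of_dist_le_mul_of_dist_lt {X : Type*} [PseudoMetricSpace X] {x : ℕ → X}
    {f : X} {k δ : ℝ} (hk₀ : 0 ≤ k) (hk : k < 1) (hx₀ : dist (x 0) f < δ)
    (hstep : ∀ n, dist (x n) f < δ → dist (x (n + 1)) f ≤ k * dist (x n) f) :
    Tendsto x atTop (𝓝 f) := by
  have hgeom : ∀ n, dist (x n) f ≤ k ^ n * dist (x 0) f ∧ dist (x n) f < δ := by
    intro n
    induction n with
    | zero => simpa using hx₀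
    | succ n ih =>
      have h := hstep n ih.2
      refine ⟨h.trans ?_, h.trans_lt ?_⟩
      · rw [pow_succ', mul_assoc]
        exact mul_le_mul_of_nonneg_left ih.1 hk₀
      · nlinarith [dist_nonneg (x := x n) (y := f)]
  rw [tendsto_iff_dist_tendsto_zero]
  refine squeeze_zero (fun _ => dist_nonneg) (fun n => (hgeom n).1) ?_
  simpa using (tendsto_pow_atTop_nhds_zero_of_lt_one hk₀ hk).mul_const (dist (x 0) f)

section

variable {V : Type*} [NormedAddCommGroup V] [InnerProductSpace ℝ V]

theorem eq_add_inner_smul_of_forall_dist_le {f u z w : V} (hu : ‖u‖ = 1)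
    (hw : ∃ t : ℝ, w = f + t • u) (hmin : ∀ t : ℝ, dist z w ≤ dist z (f + t • u)) :
    w = f + ⟪z - f, u⟫ • u := by
  obtain ⟨t₀, rfl⟩ := hw
  have hdist : ∀ t : ℝ, dist z (f + t • u) ^ 2 = ‖z - f‖ ^ 2 - 2 * t * ⟪z - f, u⟫ + t ^ 2 := by
    intro t
    rw [dist_eq_norm, sub_add_eq_sub_sub, norm_sub_sq_real, inner_smul_right, norm_smul, hu,
      Real.norm_eq_abs, mul_one, sq_abs]
    ring
  have h := pow_le_pow_left₀ dist_nonneg (hmin ⟪z - f, u⟫) 2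
  rw [hdist, hdist] at h
  have ht₀ : t₀ = ⟪z - f, u⟫ := by nlinarith [sq_nonneg (t₀ - ⟪z - f, u⟫)]
  rw [ht₀]

theorem exists_eq_add_smul_iff {q d f : V} (hd : d ≠ 0) (hf : ∃ t : ℝ, f = q + t • d) (p : V) :
    (∃ t : ℝ, p = q + t • d) ↔ ∃ t : ℝ, p = f + t • (‖d‖⁻¹ • d) := by
  obtain ⟨t₀, rfl⟩ := hf
  have hd' : ‖d‖ ≠ 0 := norm_ne_zero_iff.2 hd
  constructor
  · rintro ⟨t, rfl⟩
    refine ⟨(t - t₀) * ‖d‖, ?_⟩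
    rw [smul_smul, mul_assoc, mul_inv_cancel₀ hd', mul_one, sub_smul]
    abel
  · rintro ⟨t, rfl⟩
    exact ⟨t₀ + t * ‖d‖⁻¹, by rw [smul_smul, add_smul, add_assoc]⟩

theorem setOf_exists_add_smul_eq_setOf_inner_eq_zero (hV : Module.finrank ℝ V = 2)
    {q d f N : V} (hN : N ≠ 0) (hd : d ≠ 0) (hdN : ⟪d, N⟫ = 0) (hf : ∃ t : ℝ, f = q + t • d) :
    {p | ∃ t : ℝ, p = q + t • d} = {p | ⟪p - f, N⟫ = 0} := by
  obtain ⟨t₀, rfl⟩ := hf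
  ext p
  constructor
  · rintro ⟨t, rfl⟩
    rw [Set.mem_ofPred_eq, show q + t • d - (q + t₀ • d) = (t - t₀) • d by module,
      real_inner_smul_left, hdN, mul_zero]
  · intro hp
    have : Fact (Module.finrank ℝ V = 2) := ⟨hV⟩
    obtain ⟨c, hc⟩ := Submodule.mem_span_singleton.1 <|
      Submodule.mem_span_singleton_of_inner_eq_zero_of_inner_eq_zero hN hd
        ((real_inner_comm _ _).trans hp) ((real_inner_comm _ _).trans hdN)
    exact ⟨t₀ + c, by rw [add_smul, ← add_assoc, hc]; abel⟩

/-- Nonnegativity of the Gram determinant of `v, n, u`: Cauchy–Schwarz for the components of `v`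
and `u` orthogonal to `n`. -/
theorem inner_sq_add_inner_sq_sub_le {n u : V} (hn : ‖n‖ = 1) (hu : ‖u‖ = 1) (v : V) :
    ⟪v, n⟫ ^ 2 + ⟪v, u⟫ ^ 2 - 2 * ⟪v, n⟫ * ⟪v, u⟫ * ⟪u, n⟫ ≤ (1 - ⟪u, n⟫ ^ 2) * ‖v‖ ^ 2 := by
  have hcs := real_inner_mul_inner_self_le (v - ⟪v, n⟫ • n) (u - ⟪u, n⟫ • n)
  have hnn : ⟪n, n⟫ = 1 := by rw [real_inner_self_eq_norm_sq, hn, one_pow]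
  have huu : ⟪u, u⟫ = 1 := by rw [real_inner_self_eq_norm_sq, hu, one_pow]
  simp only [inner_sub_left, inner_sub_right, inner_smul_left, inner_smul_right,
    real_inner_self_eq_norm_sq v, hnn, huu, real_inner_comm n, real_inner_comm u v,
    RCLike.conj_to_real] at hcs
  rw [real_inner_comm n v, real_inner_comm u v, real_inner_comm n u]
  nlinarith [hcs]

/-- The vector on the left is the linear Douglas–Rachford operator of the hyperplane `nᗮ` and the
line `ℝ ∙ u` applied to `v`. -/
theorem norm_inner_smul_add_inner_reflect_smul_le {n u : V} (hn : ‖n‖ = 1) (hu : ‖u‖ = 1) (v : V) :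
    ‖⟪v, n⟫ • n + ⟪v - (2 * ⟪v, n⟫) • n, u⟫ • u‖ ≤ √(1 - ⟪u, n⟫ ^ 2) * ‖v‖ := by
  have hnn : ⟪n, n⟫ = 1 := by rw [real_inner_self_eq_norm_sq, hn, one_pow]
  have huu : ⟪u, u⟫ = 1 := by rw [real_inner_self_eq_norm_sq, hu, one_pow]
  have hsq : ‖⟪v, n⟫ • n + ⟪v - (2 * ⟪v, n⟫) • n, u⟫ • u‖ ^ 2
      = ⟪v, n⟫ ^ 2 + ⟪v, u⟫ ^ 2 - 2 * ⟪v, n⟫ * ⟪v, u⟫ * ⟪u, n⟫ := by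
    rw [← real_inner_self_eq_norm_sq]
    simp only [inner_add_left, inner_add_right, inner_sub_left, inner_smul_left, inner_smul_right,
      hnn, huu, real_inner_comm n u, RCLike.conj_to_real]
    ring
  rw [← Real.sqrt_sq (norm_nonneg _), hsq, ← Real.sqrt_sq (norm_nonneg v), ← Real.sqrt_mul']
  · exact Real.sqrt_le_sqrt (inner_sq_add_inner_sq_sub_le hn hu v)
  · positivity

/-- `x - a + P (2 • a - x)`, with `P` the projection onto the line `f + ℝ ∙ u`, is the
Douglas–Rachford step from `x` for a nearest point `a`. -/
theorem norm_douglasRachford_step_sub_le {n u : V} (hn : ‖n‖ = 1) (hu : ‖u‖ = 1) (f x a : V) :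
    ‖x - a + (f + ⟪(2 : ℝ) • a - x - f, u⟫ • u) - f‖ ≤
      √(1 - ⟪u, n⟫ ^ 2) * ‖x - f‖ + 3 * ‖a - f - ((x - f) - ⟪x - f, n⟫ • n)‖ := by
  set v := x - f with hv
  set r := a - f - (v - ⟪v, n⟫ • n) with hr
  have hdecomp : x - a + (f + ⟪(2 : ℝ) • a - x - f, u⟫ • u) - f
      = (⟪v, n⟫ • n + ⟪v - (2 * ⟪v, n⟫) • n, u⟫ • u) - r + (2 * ⟪r, u⟫) • u := by
    have h2a : (2 : ℝ) • a - x - f = v - (2 * ⟪v, n⟫) • n + (2 : ℝ) • r := by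
      rw [hr, hv]; module
    rw [h2a, inner_add_left, inner_smul_left, RCLike.conj_to_real, hr, hv]
    module
  have hru : ‖(2 * ⟪r, u⟫) • u‖ ≤ 2 * ‖r‖ := by
    rw [norm_smul, hu, mul_one, Real.norm_eq_abs, abs_mul, abs_two]
    gcongr
    simpa [hu] using abs_real_inner_le_norm r u
  rw [hdecomp]
  calc _ ≤ ‖⟪v, n⟫ • n + ⟪v - (2 * ⟪v, n⟫) • n, u⟫ • u‖ + ‖r‖ + ‖(2 * ⟪r, u⟫) • u‖ :=
        (norm_add_le _ _).trans (add_le_add_left (norm_sub_le _ _) _)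
    _ ≤ √(1 - ⟪u, n⟫ ^ 2) * ‖v‖ + 3 * ‖r‖ := by
      linarith [norm_inner_smul_add_inner_reflect_smul_le hn hu v]

theorem infDist_le_abs_inner_add_mul_sq {E : Set V} {f n : V} {K : ℝ} (hK : 0 ≤ K)
    (hn : ‖n‖ = 1) (htan : ∀ w, ⟪w, n⟫ = 0 → ‖w‖ ≤ 1 → ∃ e ∈ E, ‖e - (f + w)‖ ≤ K * ‖w‖ ^ 2)
    {x : V} (hx : ‖x - f‖ ≤ 1) :
    infDist x E ≤ |⟪x - f, n⟫| + K * ‖x - f‖ ^ 2 := by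
  set v := x - f with hv
  set p := v - ⟪v, n⟫ • n with hp_def
  have hpn : ⟪p, n⟫ = 0 := by
    rw [hp_def, inner_sub_left, real_inner_smul_left, real_inner_self_eq_norm_sq, hn]
    ring
  have hp : ‖p‖ ≤ ‖v‖ := by
    have : ‖p‖ ^ 2 = ‖v‖ ^ 2 - ⟪v, n⟫ ^ 2 := by
      rw [hp_def, norm_sub_sq_real, real_inner_smul_right, norm_smul, hn, Real.norm_eq_abs,
        mul_one, sq_abs]
      ring
    nlinarith [norm_nonneg p, norm_nonneg v]
  obtain ⟨e, heE, he⟩ := htan p hpn (hp.trans hx)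
  calc infDist x E ≤ ‖x - e‖ := dist_eq_norm x e ▸ infDist_le_dist_of_mem heE
    _ = ‖⟪v, n⟫ • n - (e - (f + p))‖ := by congr 1; rw [hp_def, hv]; abel
    _ ≤ ‖⟪v, n⟫ • n‖ + ‖e - (f + p)‖ := norm_sub_le _ _
    _ ≤ |⟪v, n⟫| + K * ‖v‖ ^ 2 := by
      rw [norm_smul, hn, Real.norm_eq_abs, mul_one]
      gcongr
      exact he.trans (by gcongr)

theorem norm_nearest_sub_tangent_sq_le {E : Set V} {f n : V} {K : ℝ} (hK : 0 ≤ K) (hn : ‖n‖ = 1)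
    (hfE : f ∈ E) (hcurv : ∀ a ∈ E, |⟪a - f, n⟫| ≤ K * ‖a - f‖ ^ 2)
    (htan : ∀ w, ⟪w, n⟫ = 0 → ‖w‖ ≤ 1 → ∃ e ∈ E, ‖e - (f + w)‖ ≤ K * ‖w‖ ^ 2)
    {x a : V} (ha : a ∈ E) (hxa : ‖x - a‖ = infDist x E) (hx : ‖x - f‖ ≤ 1) :
    ‖a - f - ((x - f) - ⟪x - f, n⟫ • n)‖ ^ 2 ≤ (10 * K + K ^ 2) * ‖x - f‖ ^ 3 := by
  have hxa_le : ‖x - a‖ ≤ |⟪x - f, n⟫| + K * ‖x - f‖ ^ 2 :=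
    hxa ▸ infDist_le_abs_inner_add_mul_sq hK hn htan hx
  have haf : ‖a - f‖ ≤ 2 * ‖x - f‖ :=
    calc ‖a - f‖ = ‖(x - f) - (x - a)‖ := by abel_nf
      _ ≤ ‖x - f‖ + ‖x - a‖ := norm_sub_le _ _
      _ ≤ 2 * ‖x - f‖ := by linarith [hxa ▸ dist_eq_norm x f ▸ infDist_le_dist_of_mem hfE]
  set v := x - f with hv
  set β := ⟪v, n⟫
  set ε := ⟪a - f, n⟫
  have hβ : |β| ≤ ‖v‖ := by simpa [hn] using abs_real_inner_le_norm v n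
  have hε : |ε| ≤ 4 * K * ‖v‖ ^ 2 :=
    (hcurv a ha).trans (by nlinarith [pow_le_pow_left₀ (norm_nonneg _) haf 2])
  have hr : ‖x - a‖ ^ 2 = β ^ 2 - 2 * β * ε + ‖a - f - (v - β • n)‖ ^ 2 := by
    have hxa_eq : x - a = β • n - (a - f - (v - β • n)) := by rw [hv]; abel
    have hrn : ⟪a - f - (v - β • n), n⟫ = ε := by
      rw [inner_sub_left (a - f), inner_sub_left v, real_inner_smul_left,
        real_inner_self_eq_norm_sq, hn]
      ring
    rw [hxa_eq, norm_sub_sq_real (β • n), real_inner_smul_left, real_inner_comm, hrn, norm_smul,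
      hn, Real.norm_eq_abs, mul_one, sq_abs]
    ring
  have hv₀ := norm_nonneg v
  have hxa_sq := pow_le_pow_left₀ (norm_nonneg _) hxa_le 2
  have hβε : β * ε ≤ ‖v‖ * (4 * K * ‖v‖ ^ 2) :=
    (le_abs_self _).trans (abs_mul β ε ▸ mul_le_mul hβ hε (abs_nonneg _) hv₀)
  have hv4 : ‖v‖ ^ 4 ≤ ‖v‖ ^ 3 := pow_le_pow_of_le_one hv₀ hx (by norm_num)
  nlinarith [sq_abs β, mul_le_mul_of_nonneg_right hβ (by positivity : 0 ≤ K * ‖v‖ ^ 2),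
    mul_le_mul_of_nonneg_left hv4 (sq_nonneg K)]

theorem eventually_norm_nearest_sub_tangent_le {E : Set V} {f n : V} {K : ℝ} (hK : 0 ≤ K)
    (hn : ‖n‖ = 1) (hfE : f ∈ E) (hcurv : ∀ a ∈ E, |⟪a - f, n⟫| ≤ K * ‖a - f‖ ^ 2)
    (htan : ∀ w, ⟪w, n⟫ = 0 → ‖w‖ ≤ 1 → ∃ e ∈ E, ‖e - (f + w)‖ ≤ K * ‖w‖ ^ 2)
    {η : ℝ} (hη : 0 < η) :
    ∀ᶠ x in 𝓝 f, ∀ a ∈ E, ‖x - a‖ = infDist x E →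
      ‖a - f - ((x - f) - ⟪x - f, n⟫ • n)‖ ≤ η * ‖x - f‖ := by
  set C := 10 * K + K ^ 2
  have hC : 0 ≤ C := by positivity
  have hρ : 0 < min 1 (η ^ 2 / (C + 1)) := lt_min one_pos (div_pos (pow_pos hη 2) (by linarith))
  have hball : ∀ᶠ x in 𝓝 f, ‖x - f‖ < min 1 (η ^ 2 / (C + 1)) := by
    filter_upwards [ball_mem_nhds f hρ] with x hx
    rwa [mem_ball, dist_eq_norm] at hx
  filter_upwards [hball] with x hx a ha hxa
  have hsq := norm_nearest_sub_tangent_sq_le hK hn hfE hcurv htan ha hxa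
    (hx.le.trans (min_le_left _ _))
  have hCv : C * ‖x - f‖ ≤ η ^ 2 := by
    have := (lt_div_iff₀ (by linarith)).1 (hx.trans_le (min_le_right _ _))
    nlinarith [norm_nonneg (x - f)]
  refine (pow_le_pow_iff_left₀ (norm_nonneg _) (by positivity) two_ne_zero).1 (hsq.trans ?_)
  calc C * ‖x - f‖ ^ 3 = (C * ‖x - f‖) * ‖x - f‖ ^ 2 := by ring
    _ ≤ η ^ 2 * ‖x - f‖ ^ 2 := by gcongr
    _ = (η * ‖x - f‖) ^ 2 := by ring

def quadric (A : V →L[ℝ] V) : Set V := {p | ⟪A p, p⟫ = 1}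

theorem mem_quadric {A : V →L[ℝ] V} {p : V} : p ∈ quadric A ↔ ⟪A p, p⟫ = 1 := Iff.rfl

theorem apply_ne_zero_of_mem_quadric {A : V →L[ℝ] V} {p : V} (hp : p ∈ quadric A) : A p ≠ 0 :=
  fun h => by simp [mem_quadric, h] at hp

theorem abs_inner_sub_apply_le {A : V →L[ℝ] V} (hA : A.IsSymmetric) {a f : V}
    (ha : a ∈ quadric A) (hf : f ∈ quadric A) :
    |⟪a - f, A f⟫| ≤ ‖A‖ / 2 * ‖a - f‖ ^ 2 := by
  have heq : ⟪a - f, A f⟫ = -(⟪A (a - f), a - f⟫ / 2) := by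
    have hsym : ⟪A a, f⟫ = ⟪a, A f⟫ := hA a f
    rw [mem_quadric] at ha hf
    rw [map_sub, inner_sub_left, inner_sub_left, inner_sub_right, inner_sub_right, hsym,
      real_inner_comm (A f) f, real_inner_comm (A f) a, ha, hf]
    ring
  have hbound : |⟪A (a - f), a - f⟫| ≤ ‖A‖ * ‖a - f‖ ^ 2 :=
    calc |⟪A (a - f), a - f⟫| ≤ ‖A (a - f)‖ * ‖a - f‖ := abs_real_inner_le_norm _ _
      _ ≤ ‖A‖ * ‖a - f‖ * ‖a - f‖ := by gcongr; exact A.le_opNorm _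
      _ = ‖A‖ * ‖a - f‖ ^ 2 := by ring
  rw [heq, abs_neg, abs_div, abs_two]
  linarith

theorem abs_inv_sqrt_one_add_sub_one_le {q : ℝ} (hq : 0 ≤ q) : |(√(1 + q))⁻¹ - 1| ≤ q / 2 := by
  have hs : 1 ≤ √(1 + q) := Real.one_le_sqrt.2 (by linarith)
  have hs' : √(1 + q) ≤ 1 + q / 2 := Real.sqrt_le_left (by positivity) |>.2 (by nlinarith)
  have hlow : 1 - q / 2 ≤ 1 / √(1 + q) := by
    rw [le_div_iff₀ (by positivity)]
    nlinarith
  rw [abs_le, ← one_div]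
  constructor
  · linarith
  · linarith [(div_le_one (by positivity)).2 hs]

theorem exists_mem_quadric_norm_sub_le {A : V →L[ℝ] V} (hA : A.IsPositive) {f w : V}
    (hf : f ∈ quadric A) (hw : ⟪w, A f⟫ = 0) :
    ∃ e ∈ quadric A, ‖e - (f + w)‖ ≤ ‖A‖ / 2 * ‖w‖ ^ 2 * ‖f + w‖ := by
  set q := ⟪A w, w⟫
  have hq : 0 ≤ q := hA.inner_nonneg_left w
  have hq_le : q ≤ ‖A‖ * ‖w‖ ^ 2 :=
    calc q ≤ ‖A w‖ * ‖w‖ := real_inner_le_norm _ _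
      _ ≤ ‖A‖ * ‖w‖ * ‖w‖ := by gcongr; exact A.le_opNorm _
      _ = ‖A‖ * ‖w‖ ^ 2 := by ring
  have hfw : ⟪A (f + w), f + w⟫ = 1 + q := by
    rw [mem_quadric] at hf
    rw [map_add, inner_add_left, inner_add_right, inner_add_right, hf,
      hA.inner_left_eq_inner_right w f, real_inner_comm w (A f), hw]
    ring
  refine ⟨(√(1 + q))⁻¹ • (f + w), ?_, ?_⟩
  · have hsq : √(1 + q) ^ 2 = 1 + q := Real.sq_sqrt (by positivity)
    have hpos : 0 < √(1 + q) := Real.sqrt_pos.2 (by positivity)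
    rw [mem_quadric, map_smul, real_inner_smul_left, real_inner_smul_right, hfw]
    field_simp
    linarith
  · have hsub : (√(1 + q))⁻¹ • (f + w) - (f + w) = ((√(1 + q))⁻¹ - 1) • (f + w) := by
      rw [sub_smul, one_smul]
    rw [hsub, norm_smul, Real.norm_eq_abs]
    gcongr
    exact (abs_inv_sqrt_one_add_sub_one_le hq).trans (by linarith)

theorem exists_quadric_normal_bounds {A : V →L[ℝ] V} (hA : A.IsPositive) {f : V}
    (hf : f ∈ quadric A) :
    ∃ K, 0 ≤ K ∧
      (∀ a ∈ quadric A, |⟪a - f, ‖A f‖⁻¹ • A f⟫| ≤ K * ‖a - f‖ ^ 2) ∧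
      ∀ w, ⟪w, ‖A f‖⁻¹ • A f⟫ = 0 → ‖w‖ ≤ 1 → ∃ e ∈ quadric A, ‖e - (f + w)‖ ≤ K * ‖w‖ ^ 2 := by
  have hAf' : 0 < ‖A f‖⁻¹ := inv_pos.2 (norm_pos_iff.2 (apply_ne_zero_of_mem_quadric hf))
  refine ⟨‖A‖ / 2 * (‖A f‖⁻¹ + ‖f‖ + 1), by positivity, fun a ha => ?_, fun w hw hw₁ => ?_⟩
  · rw [real_inner_smul_right, abs_mul, abs_of_pos hAf']
    calc ‖A f‖⁻¹ * |⟪a - f, A f⟫| ≤ ‖A f‖⁻¹ * (‖A‖ / 2 * ‖a - f‖ ^ 2) :=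
          mul_le_mul_of_nonneg_left (abs_inner_sub_apply_le hA.isSymmetric ha hf) hAf'.le
      _ ≤ ‖A‖ / 2 * (‖A f‖⁻¹ + ‖f‖ + 1) * ‖a - f‖ ^ 2 := by
        have := mul_nonneg (norm_nonneg A) (sq_nonneg ‖a - f‖)
        nlinarith [norm_nonneg f]
  · rw [real_inner_smul_right, mul_eq_zero, or_iff_right hAf'.ne'] at hw
    obtain ⟨e, he, hdist⟩ := exists_mem_quadric_norm_sub_le hA hf hw
    refine ⟨e, he, hdist.trans ?_⟩
    have hfw : ‖f + w‖ ≤ ‖f‖ + 1 := (norm_add_le _ _).trans (by linarith)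
    calc ‖A‖ / 2 * ‖w‖ ^ 2 * ‖f + w‖ ≤ ‖A‖ / 2 * ‖w‖ ^ 2 * (‖f‖ + 1) := by gcongr
      _ ≤ ‖A‖ / 2 * (‖A f‖⁻¹ + ‖f‖ + 1) * ‖w‖ ^ 2 := by
        have := mul_nonneg (norm_nonneg A) (sq_nonneg ‖w‖)
        nlinarith

theorem exists_norm_douglasRachford_step_sub_le_mul {A : V →L[ℝ] V} (hA : A.IsPositive) {f u : V}
    (hf : f ∈ quadric A) (hu : ‖u‖ = 1) (htr : ⟪u, A f⟫ ≠ 0) :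
    ∃ δ > 0, ∃ k, 0 ≤ k ∧ k < 1 ∧ ∀ x a, a ∈ quadric A → ‖x - a‖ = infDist x (quadric A) →
      ‖x - f‖ < δ → ‖x - a + (f + ⟪(2 : ℝ) • a - x - f, u⟫ • u) - f‖ ≤ k * ‖x - f‖ := by
  have hAf := apply_ne_zero_of_mem_quadric hf
  set n := ‖A f‖⁻¹ • A f
  have hn : ‖n‖ = 1 := norm_smul_inv_norm hAf
  have hs : ⟪u, n⟫ ≠ 0 := by
    rw [real_inner_smul_right]
    exact mul_ne_zero (inv_ne_zero (norm_ne_zero_iff.2 hAf)) htr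
  set k₀ := √(1 - ⟪u, n⟫ ^ 2)
  have hk₀ : k₀ < 1 :=
    (Real.sqrt_lt' one_pos).2 (by linarith [pow_pos (abs_pos.2 hs) 2, sq_abs ⟪u, n⟫])
  obtain ⟨K, hK, hcurv, htan⟩ := exists_quadric_normal_bounds hA hf
  obtain ⟨δ, hδ, hnear⟩ := Metric.eventually_nhds_iff.1 <|
    eventually_norm_nearest_sub_tangent_le hK hn hf hcurv htan (η := (1 - k₀) / 6) (by linarith)
  refine ⟨δ, hδ, (1 + k₀) / 2, by positivity, by linarith, fun x a ha hxa hx => ?_⟩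
  calc _ ≤ k₀ * ‖x - f‖ + 3 * ‖a - f - ((x - f) - ⟪x - f, n⟫ • n)‖ :=
        norm_douglasRachford_step_sub_le hn hu f x a
    _ ≤ k₀ * ‖x - f‖ + 3 * ((1 - k₀) / 6 * ‖x - f‖) := by
        gcongr
        exact hnear (by rwa [dist_eq_norm]) a ha hxa
    _ = (1 + k₀) / 2 * ‖x - f‖ := by ring

theorem douglasRachford_quadric_line_local_convergence {A : V →L[ℝ] V} (hA : A.IsPositive)
    {f u : V} (hf : f ∈ quadric A) (hu : ‖u‖ = 1) (htr : ⟪u, A f⟫ ≠ 0) {PL : V → V}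
    (hPL : ∀ z, PL z = f + ⟪z - f, u⟫ • u) :
    ∃ δ > 0, ∀ x a : ℕ → V, (∀ n, a n ∈ quadric A) →
      (∀ n, ‖x n - a n‖ = infDist (x n) (quadric A)) →
      (∀ n : ℕ, x (n + 1) = (1 / 2 : ℝ) • (x n + (2 • PL (2 • a n - x n) - (2 • a n - x n)))) →
      ‖x 0 - f‖ < δ → Tendsto x atTop (𝓝 f) := by
  obtain ⟨δ, hδ, k, hk₀, hk, hstep⟩ := exists_norm_douglasRachford_step_sub_le_mul hA hf hu htr
  refine ⟨δ, hδ, fun x a ha hxa hrec hx₀ => ?_⟩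
  refine tendsto_of_dist_le_mul_of_dist_lt hk₀ hk (by rwa [dist_eq_norm]) fun n hn => ?_
  have hx : x (n + 1) = x n - a n + (f + ⟪(2 : ℝ) • a n - x n - f, u⟫ • u) := by
    rw [hrec, hPL, two_nsmul, two_nsmul, two_smul]
    module
  simp only [dist_eq_norm] at hn ⊢
  rw [hx]
  exact hstep _ _ (ha n) (hxa n) hn

end

noncomputable def ellipseOperator (b : ℝ) :
    EuclideanSpace ℝ (Fin 2) →L[ℝ] EuclideanSpace ℝ (Fin 2) :=
  Matrix.toEuclideanCLM (n := Fin 2) (𝕜 := ℝ) (Matrix.diagonal ![1, (b ^ 2)⁻¹])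

theorem isPositive_ellipseOperator (b : ℝ) : (ellipseOperator b).IsPositive := by
  rw [← ContinuousLinearMap.isPositive_toLinearMap_iff, ellipseOperator,
    Matrix.coe_toEuclideanCLM_eq_toEuclideanLin, Matrix.isPositive_toEuclideanLin_iff]
  refine Matrix.PosSemidef.diagonal fun i => ?_
  fin_cases i <;> simp [sq_nonneg]

theorem inner_ellipseOperator (b : ℝ) (p q : EuclideanSpace ℝ (Fin 2)) :
    ⟪p, ellipseOperator b q⟫ = p 0 * q 0 + p 1 * q 1 / b ^ 2 := by
  simp [EuclideanSpace.inner_eq_star_dotProduct, ellipseOperator, Fin.sum_univ_two, dotProduct]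
  ring

theorem setOf_ellipse_eq_quadric (b : ℝ) :
    {p : EuclideanSpace ℝ (Fin 2) | p 0 ^ 2 + (p 1 / b) ^ 2 = 1} = quadric (ellipseOperator b) := by
  ext p
  rw [mem_quadric, real_inner_comm, inner_ellipseOperator, Set.mem_ofPred_eq]
  ring_nf

theorem setOf_ellipse_tangent_eq (b : ℝ) (f : EuclideanSpace ℝ (Fin 2)) :
    {p : EuclideanSpace ℝ (Fin 2) | f 0 * (p 0 - f 0) + f 1 / b ^ 2 * (p 1 - f 1) = 0} =
      {p | ⟪p - f, ellipseOperator b f⟫ = 0} := by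
  ext p
  simp only [Set.mem_ofPred_eq, inner_ellipseOperator, PiLp.sub_apply]
  ring_nf

theorem douglasRachford_ellipse_line_local_convergence_general
    (b : ℝ)
    (E : Set (EuclideanSpace ℝ (Fin 2)))
    (hE : E = {p : EuclideanSpace ℝ (Fin 2) | (p 0) ^ 2 + (p 1 / b) ^ 2 = 1})
    (L : Set (EuclideanSpace ℝ (Fin 2)))
    (q d : EuclideanSpace ℝ (Fin 2)) (hd : d ≠ 0)
    (hL : L = {p | ∃ t : ℝ, p = q + t • d})
    (f : EuclideanSpace ℝ (Fin 2)) (hfE : f ∈ E) (hfL : f ∈ L)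
    (htan : L ≠ {p : EuclideanSpace ℝ (Fin 2) |
      f 0 * (p 0 - f 0) + (f 1 / b ^ 2) * (p 1 - f 1) = 0})
    (PL : EuclideanSpace ℝ (Fin 2) → EuclideanSpace ℝ (Fin 2))
    (hPL : ∀ z, PL z ∈ L ∧ ∀ y ∈ L, dist z (PL z) ≤ dist z y) :
    ∃ δ > 0, ∀ x a : ℕ → EuclideanSpace ℝ (Fin 2),
      (∀ n, a n ∈ E) → (∀ n, ‖x n - a n‖ = infDist (x n) E) →
      (∀ n : ℕ, x (n + 1) =
        (1 / 2 : ℝ) • (x n + (2 • PL (2 • a n - x n) - (2 • a n - x n)))) →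
      ‖x 0 - f‖ < δ →
      Tendsto x atTop (𝓝 f) := by
  rw [setOf_ellipse_eq_quadric] at hE
  rw [setOf_ellipse_tangent_eq, hL] at htan
  rw [hL] at hfL hPL
  subst hE
  set u := ‖d‖⁻¹ • d
  have hu : ‖u‖ = 1 := norm_smul_inv_norm hd
  have hPLu : ∀ z, PL z = f + ⟪z - f, u⟫ • u := fun z =>
    eq_add_inner_smul_of_forall_dist_le hu ((exists_eq_add_smul_iff hd hfL _).1 (hPL z).1)
      fun t => (hPL z).2 _ ((exists_eq_add_smul_iff hd hfL _).2 ⟨t, rfl⟩)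
  have htr : ⟪u, ellipseOperator b f⟫ ≠ 0 := by
    rw [real_inner_smul_left]
    refine mul_ne_zero (inv_ne_zero (norm_ne_zero_iff.2 hd)) fun hdN => htan ?_
    exact setOf_exists_add_smul_eq_setOf_inner_eq_zero finrank_euclideanSpace_fin
      (apply_ne_zero_of_mem_quadric hfE) hd hdN hfL
  exact douglasRachford_quadric_line_local_convergence (isPositive_ellipseOperator b) hfE hu htr
    hPLu

/-- For the ellipse `E = {(x,y) : x² + (y/b)² = 1}` and a line `L` through a
feasible point `f ∈ E ∩ L` which is not the tangent line to `E` at `f`, the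
Douglas–Rachford algorithm `x_{n+1} = (1/2)(x_n + R_L R_E x_n)` (with nearest-point
selections onto `E` and the metric projection onto `L`) is locally convergent at `f`:
all iterates started sufficiently close to `f` converge to `f`. -/
theorem douglasRachford_ellipse_line_local_convergence
    (b : ℝ) (hb : 0 < b)
    (E : Set (EuclideanSpace ℝ (Fin 2)))
    (hE : E = {p : EuclideanSpace ℝ (Fin 2) | (p 0) ^ 2 + (p 1 / b) ^ 2 = 1})
    (L : Set (EuclideanSpace ℝ (Fin 2)))
    (q d : EuclideanSpace ℝ (Fin 2)) (hd : d ≠ 0)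
    (hL : L = {p | ∃ t : ℝ, p = q + t • d})
    (f : EuclideanSpace ℝ (Fin 2)) (hfE : f ∈ E) (hfL : f ∈ L)
    (htan : L ≠ {p : EuclideanSpace ℝ (Fin 2) |
      f 0 * (p 0 - f 0) + (f 1 / b ^ 2) * (p 1 - f 1) = 0})
    (PL : EuclideanSpace ℝ (Fin 2) → EuclideanSpace ℝ (Fin 2))
    (hPL : ∀ z, PL z ∈ L ∧ ∀ y ∈ L, dist z (PL z) ≤ dist z y) :
    ∃ δ > 0, ∀ x a : ℕ → EuclideanSpace ℝ (Fin 2),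
      (∀ n, a n ∈ E) → (∀ n, ‖x n - a n‖ = infDist (x n) E) →
      (∀ n : ℕ, x (n + 1) =
        (1 / 2 : ℝ) • (x n + (2 • PL (2 • a n - x n) - (2 • a n - x n)))) →
      ‖x 0 - f‖ < δ →
      Tendsto x atTop (𝓝 f) :=
  douglasRachford_ellipse_line_local_convergence_general b E hE L q d hd hL f hfE hfL htan PL hPL
end
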